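/- Let A ∈ GL(2,ℝ) be a matrix whose (complex) eigenvalues are non-real. Then for every ε > 0 there exist an integer N ≥ 1 and matrices B_0, …, B_{N−1} ∈ GL(2,ℝ) with ‖B_j − A‖ < ε for every j, such that the product B_{N−1}···B_0 equals c·Id for some real number c > 0; that is, a large power of a matrix with complex eigenvalues can be turned into a positive homothety by an arbitrarily small perturbation of each factor. -/

import Mathlib

noncomputable section

abbrev M2 := Matrix (Fin 2) (Fin 2) ℝ
abbrev E2 := EuclideanSpace ℝ (Fin 2)

/-- The continuous linear map on Euclidean `ℝ²` induced by a `2 × 2` matrix. -/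
def mCLM (A : M2) : E2 →L[ℝ] E2 := Matrix.toEuclideanCLM (𝕜 := ℝ) A

/-- Operator norm (w.r.t. the Euclidean norm) of a `2 × 2` matrix. -/
def mnorm (A : M2) : ℝ := ‖mCLM A‖

/-- Action of a `2 × 2` matrix on a vector of Euclidean `ℝ²`. -/
def mact (A : M2) (x : E2) : E2 := mCLM A x

end

/-- The product `B (N-1) * ⋯ * B 0` of a finite tuple of matrices. -/
def finProdRev {N : ℕ} (B : Fin N → M2) : M2 := ((List.ofFn B).reverse).prod

/-!
Since `tr A ^ 2 - 4 det A < 0`, Cayley–Hamilton makes `J = (A - (tr A / 2) • 1) / s` a square root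
of `-1` for a suitable `s > 0`, so `A = φ λ` for the `ℝ`-algebra embedding `φ : ℂ → M₂(ℝ)` sending
`i` to `J` and an eigenvalue `λ` of `A`. The numbers `r e^{2πiq}` with `r > 0`, `q ∈ ℚ` are dense
in `ℂ \ {0}` and `(r e^{2πiq}) ^ den q = r ^ den q`. Taking such a `μ` near `λ`, all factors equal
to `φ μ` do the job, by continuity of `φ`.
-/

open Complex Real

lemma continuous_mnorm : Continuous mnorm :=
  continuous_norm.comp (LinearMap.continuous_of_finiteDimensional
    (Matrix.toEuclideanCLM (𝕜 := ℝ) (n := Fin 2)).toAlgEquiv.toLinearMap)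

lemma finProdRev_const {N : ℕ} (X : M2) : finProdRev (fun _ : Fin N => X) = X ^ N := by
  rw [finProdRev, List.ofFn_const, List.reverse_replicate, List.prod_replicate]

lemma Matrix.mul_self_sub_trace_smul_add_det_smul_eq_zero {R : Type*} [CommRing R] [Nontrivial R]
    (A : Matrix (Fin 2) (Fin 2) R) : A * A - A.trace • A + A.det • 1 = 0 := by
  have := Matrix.aeval_self_charpoly A
  rw [Matrix.charpoly_fin_two] at this
  simpa [sq, Algebra.smul_def] using this

lemma Complex.exists_liftAux_eq_of_mul_self_sub_smul_add_smul_eq_zero {R : Type*} [Ring R]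
    [Algebra ℝ R] {a : R} {t d : ℝ} (ha : a * a - t • a + d • 1 = 0) (hdisc : t ^ 2 - 4 * d < 0) :
    ∃ (J : R) (hJ : J * J = -1) (z : ℂ), 0 < z.im ∧ liftAux J hJ z = a := by
  have hpos : 0 < d - t ^ 2 / 4 := by linarith
  set s := √(d - t ^ 2 / 4)
  have hs : 0 < s := Real.sqrt_pos.2 hpos
  set J := s⁻¹ • (a - (t / 2) • 1)
  have hJ : J * J = -1 := by
    have hsq : (a - (t / 2) • 1) * (a - (t / 2) • 1) = (-s ^ 2) • (1 : R) := by
      rw [Real.sq_sqrt hpos.le]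
      simp only [sub_mul, mul_sub, smul_mul_assoc, mul_smul_comm, one_mul, mul_one]
      linear_combination (norm := module) ha
    rw [smul_mul_smul_comm, hsq, smul_smul]
    field_simp
    simp
  refine ⟨J, hJ, ⟨t / 2, s⟩, hs, ?_⟩
  rw [liftAux_apply, smul_smul, mul_inv_cancel₀ hs.ne', one_smul, Algebra.algebraMap_eq_smul_one]
  abel

lemma Complex.exists_pow_eq_ofReal_pos_mem {z : ℂ} (hz : z ≠ 0) {U : Set ℂ} (hU : IsOpen U)
    (hzU : z ∈ U) : ∃ N : ℕ, 0 < N ∧ ∃ w ∈ U, ∃ c : ℝ, 0 < c ∧ w ^ N = c := by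
  set f : ℝ → ℂ := fun x => ‖z‖ * exp (x * (2 * π * I))
  have hf : Continuous f := by fun_prop
  have hfz : f (arg z / (2 * π)) = z := by
    have harg : ((arg z / (2 * π) : ℝ) : ℂ) * (2 * π * I) = arg z * I := by
      push_cast
      field_simp
    simp only [f, harg, norm_mul_exp_arg_mul_I]
  obtain ⟨q, hq⟩ := Rat.denseRange_cast.exists_mem_open (hU.preimage hf) ⟨_, hfz ▸ hzU⟩
  refine ⟨q.den, q.den_pos, f q, hq, ‖z‖ ^ q.den, pow_pos (norm_pos_iff.2 hz) _, ?_⟩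
  have hqden : (q.den : ℂ) * ((q : ℝ) : ℂ) = q.num := by exact_mod_cast Rat.den_mul_eq_num q
  rw [mul_pow, ← exp_nat_mul, ← mul_assoc, hqden, exp_int_mul_two_pi_mul_I]
  push_cast
  ring

theorem stmt17_general (A : M2) (hcx : A.trace ^ 2 - 4 * A.det < 0)
    (ε : ℝ) (hε : 0 < ε) :
    ∃ N : ℕ, 1 ≤ N ∧ ∃ B : Fin N → M2,
      (∀ j, IsUnit (B j) ∧ mnorm (B j - A) < ε) ∧
      ∃ c : ℝ, 0 < c ∧ finProdRev B = c • (1 : M2) := by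
  obtain ⟨J, hJ, z, hz, rfl⟩ := exists_liftAux_eq_of_mul_self_sub_smul_add_smul_eq_zero
    A.mul_self_sub_trace_smul_add_det_smul_eq_zero hcx
  set φ := liftAux J hJ
  have hU : IsOpen {w | mnorm (φ w - φ z) < ε} :=
    isOpen_lt (continuous_mnorm.comp
      (φ.toLinearMap.continuous_of_finiteDimensional.sub continuous_const)) continuous_const
  obtain ⟨N, hN, w, hw, c, hc, hwN⟩ :=
    exists_pow_eq_ofReal_pos_mem (z := z) (fun h => hz.ne' (by simp [h])) hU
      (by simpa [mnorm, mCLM] using hε)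
  have hw0 : w ≠ 0 := ne_zero_pow hN.ne' (hwN ▸ ofReal_ne_zero.2 hc.ne')
  refine ⟨N, hN, fun _ => φ w, fun _ => ⟨(isUnit_iff_ne_zero.2 hw0).map φ, hw⟩, c, hc, ?_⟩
  rw [finProdRev_const, ← map_pow, hwN, ← Complex.coe_algebraMap, φ.commutes,
    Algebra.algebraMap_eq_smul_one]

/-- A large power of a matrix with non-real eigenvalues can be turned into a
positive homothety by an arbitrarily small perturbation of each factor. -/
theorem stmt17 (A : M2) (hA : IsUnit A) (hcx : A.trace ^ 2 - 4 * A.det < 0)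
    (ε : ℝ) (hε : 0 < ε) :
    ∃ N : ℕ, 1 ≤ N ∧ ∃ B : Fin N → M2,
      (∀ j, IsUnit (B j) ∧ mnorm (B j - A) < ε) ∧
      ∃ c : ℝ, 0 < c ∧ finProdRev B = c • (1 : M2) :=
  stmt17_general A hcx ε hε
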